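/- Let p^θ(σ,σ') be a family of strictly positive stochastic matrices on a finite state space, depending smoothly (C³) on a real parameter θ, with μ a strictly positive stationary distribution of p^θ. Then the relative entropy rate admits the second-order expansion H(p^θ | p^{θ+ε}) = (1/2) ε² F(θ) + O(|ε|³) as ε → 0, where the path-space Fisher information is F(θ) = Σ_σ μ(σ) Σ_{σ'} p^θ(σ,σ') (∂_θ log p^θ(σ,σ'))². -/

import Mathlib

/-! Expand each `log p^{θ+ε}(σ,σ')` to second order by Taylor's theorem. Because every row of
`p^t` sums to one for all `t` near `θ`, differentiating the row sums gives
`∑ p ∂log p = ∑ ∂p = 0` and `∑ p ∂²log p = ∑ ∂²p - ∑ p (∂log p)² = -∑ p (∂log p)²`.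
So in each row the first-order term of the expansion vanishes and the second-order term is
`ε²/2` times that row's contribution to the Fisher information. -/

open Asymptotics Filter Topology

theorem taylor_isBigO {E : Type*} [NormedAddCommGroup E] [NormedSpace ℝ E]
    {f : ℝ → E} {x₀ : ℝ} {n : ℕ} {s : Set ℝ}
    (hs : Convex ℝ s) (hx₀s : x₀ ∈ s) (hf : ContDiffOn ℝ (n + 1) f s) :
    (fun x ↦ f x - taylorWithinEval f n s x₀ x) =O[𝓝[s] x₀] fun x ↦ (x - x₀) ^ (n + 1) := by
  have hnext : (fun x ↦ taylorWithinEval f (n + 1) s x₀ x - taylorWithinEval f n s x₀ x)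
      =O[𝓝[s] x₀] fun x ↦ (x - x₀) ^ (n + 1) := by
    simp_rw [taylorWithinEval_succ, add_sub_cancel_left]
    simpa using ((isBigO_refl (fun x ↦ (x - x₀) ^ (n + 1)) _).const_mul_left _).smul
      (isBigO_const_one ℝ (iteratedDerivWithin (n + 1) f s x₀) (𝓝[s] x₀))
  exact ((taylor_isLittleO hs hx₀s (by exact_mod_cast hf)).isBigO.add hnext).congr_left
    fun x ↦ sub_add_sub_cancel _ _ _

theorem taylorWithinEval_two_of_isOpen {f : ℝ → ℝ} {s : Set ℝ} {x₀ : ℝ} (hs : IsOpen s)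
    (hx₀ : x₀ ∈ s) (x : ℝ) :
    taylorWithinEval f 2 s x₀ x
      = f x₀ + (x - x₀) * deriv f x₀ + (x - x₀) ^ 2 / 2 * deriv (deriv f) x₀ := by
  simp only [taylor_within_apply, Finset.sum_range_succ, Finset.sum_range_zero,
    iteratedDerivWithin_of_isOpen hs hx₀, iteratedDeriv_succ, iteratedDeriv_zero, smul_eq_mul,
    Nat.factorial_zero, Nat.factorial_one, Nat.factorial_two, Nat.cast_one, Nat.cast_ofNat]
  ring

theorem isBigO_taylor_two {g : ℝ → ℝ} {I : Set ℝ} (hI : IsOpen I) {θ : ℝ} (hθ : θ ∈ I)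
    (hg : ContDiffOn ℝ 3 g I) :
    (fun ε ↦ g (θ + ε) - g θ - ε * deriv g θ - ε ^ 2 / 2 * deriv (deriv g) θ)
      =O[𝓝 0] fun ε ↦ |ε| ^ 3 := by
  obtain ⟨δ, hδ, hball⟩ := Metric.isOpen_iff.1 hI θ hθ
  have hθB : θ ∈ Metric.ball θ δ := Metric.mem_ball_self hδ
  have h := taylor_isBigO (n := 2) (convex_ball θ δ) hθB (hg.mono hball)
  rw [Metric.isOpen_ball.nhdsWithin_eq hθB] at h
  have hshift : Tendsto (θ + ·) (𝓝 0) (𝓝 θ) := by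
    simpa using (tendsto_const_nhds.add tendsto_id : Tendsto (θ + ·) (𝓝 (0:ℝ)) (𝓝 (θ + 0)))
  have h' := h.comp_tendsto hshift
  simp only [Function.comp_def, taylorWithinEval_two_of_isOpen Metric.isOpen_ball hθB,
    add_sub_cancel_left] at h'
  exact (h'.congr_left fun ε ↦ by ring).trans_le fun ε ↦ by simp

theorem sum_deriv_eq_zero_of_sum_eqOn_const {ι : Type*} [Fintype ι] {f : ι → ℝ → ℝ}
    {s : Set ℝ} {c : ℝ} (hs : IsOpen s) (hf : ∀ i, DifferentiableOn ℝ (f i) s)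
    (hsum : ∀ t ∈ s, ∑ i, f i t = c) {x : ℝ} (hx : x ∈ s) :
    ∑ i, deriv (f i) x = 0 := by
  have hconst : (fun t ↦ ∑ i, f i t) =ᶠ[𝓝 x] fun _ ↦ c := by
    filter_upwards [hs.mem_nhds hx] using hsum
  rw [← deriv_fun_sum fun i _ ↦ (hf i).differentiableAt (hs.mem_nhds hx), hconst.deriv_eq,
    deriv_const]

theorem mul_deriv_deriv_log {f : ℝ → ℝ} {s : Set ℝ} (hs : IsOpen s) (hf : ContDiffOn ℝ 2 f s)
    (hf0 : ∀ t ∈ s, f t ≠ 0) {x : ℝ} (hx : x ∈ s) :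
    f x * deriv (deriv fun t ↦ Real.log (f t)) x
      = deriv (deriv f) x - f x * deriv (fun t ↦ Real.log (f t)) x ^ 2 := by
  have hdf : DifferentiableOn ℝ f s := hf.differentiableOn (by norm_num)
  have hdf' : DifferentiableOn ℝ (deriv f) s :=
    (hf.deriv_of_isOpen (m := 1) hs (by norm_num)).differentiableOn (by norm_num)
  have hlog : deriv (fun t ↦ Real.log (f t)) =ᶠ[𝓝 x] fun t ↦ deriv f t / f t := by
    filter_upwards [hs.mem_nhds hx] with t ht
    exact deriv.log (hdf.differentiableAt (hs.mem_nhds ht)) (hf0 t ht)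
  rw [hlog.deriv_eq, hlog.eq_of_nhds, deriv_fun_div (hdf'.differentiableAt (hs.mem_nhds hx))
    (hdf.differentiableAt (hs.mem_nhds hx)) (hf0 x hx)]
  field_simp [hf0 x hx]

section ConstantSumFamily

variable {ι : Type*} [Fintype ι] {q : ℝ → ι → ℝ} {I : Set ℝ} {θ c : ℝ}

theorem sum_mul_deriv_log_eq_zero (hI : IsOpen I) (hθ : θ ∈ I)
    (hne : ∀ t ∈ I, ∀ i, q t i ≠ 0) (hsum : ∀ t ∈ I, ∑ i, q t i = c)
    (hdiff : ∀ i, DifferentiableOn ℝ (fun t ↦ q t i) I) :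
    ∑ i, q θ i * deriv (fun t ↦ Real.log (q t i)) θ = 0 := by
  have hentry : ∀ i, q θ i * deriv (fun t ↦ Real.log (q t i)) θ = deriv (fun t ↦ q t i) θ :=
    fun i ↦ by
      rw [deriv.log ((hdiff i).differentiableAt (hI.mem_nhds hθ)) (hne θ hθ i),
        mul_div_cancel₀ _ (hne θ hθ i)]
  simp only [hentry]
  exact sum_deriv_eq_zero_of_sum_eqOn_const hI hdiff hsum hθ

theorem sum_mul_deriv_deriv_log (hI : IsOpen I) (hθ : θ ∈ I)
    (hne : ∀ t ∈ I, ∀ i, q t i ≠ 0) (hsum : ∀ t ∈ I, ∑ i, q t i = c)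
    (hsmooth : ∀ i, ContDiffOn ℝ 2 (fun t ↦ q t i) I) :
    ∑ i, q θ i * deriv (deriv fun t ↦ Real.log (q t i)) θ
      = -∑ i, q θ i * deriv (fun t ↦ Real.log (q t i)) θ ^ 2 := by
  have hderiv_sum : ∀ t ∈ I, ∑ i, deriv (fun t ↦ q t i) t = 0 :=
    fun t ht ↦ sum_deriv_eq_zero_of_sum_eqOn_const hI
      (fun i ↦ (hsmooth i).differentiableOn (by norm_num)) hsum ht
  have hderiv2_sum : ∑ i, deriv (deriv fun t ↦ q t i) θ = 0 :=
    sum_deriv_eq_zero_of_sum_eqOn_const hI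
      (fun i ↦ ((hsmooth i).deriv_of_isOpen (m := 1) hI (by norm_num)).differentiableOn
        (by norm_num)) hderiv_sum hθ
  simp only [mul_deriv_deriv_log hI (hsmooth _) (fun t ht ↦ hne t ht _) hθ,
    Finset.sum_sub_distrib, hderiv2_sum, zero_sub]

theorem isBigO_sum_mul_log_div_sub_fisher (hI : IsOpen I) (hθ : θ ∈ I)
    (hne : ∀ t ∈ I, ∀ i, q t i ≠ 0) (hsum : ∀ t ∈ I, ∑ i, q t i = c)
    (hsmooth : ∀ i, ContDiffOn ℝ 3 (fun t ↦ q t i) I) :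
    (fun ε ↦ ∑ i, q θ i * Real.log (q θ i / q (θ + ε) i)
        - 1 / 2 * ε ^ 2 * ∑ i, q θ i * deriv (fun t ↦ Real.log (q t i)) θ ^ 2)
      =O[𝓝 0] fun ε ↦ |ε| ^ 3 := by
  set ℓ : ι → ℝ → ℝ := fun i t ↦ Real.log (q t i)
  have hremainder : ∀ i, (fun ε ↦ ℓ i (θ + ε) - ℓ i θ - ε * deriv (ℓ i) θ
      - ε ^ 2 / 2 * deriv (deriv (ℓ i)) θ) =O[𝓝 0] fun ε ↦ |ε| ^ 3 := fun i ↦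
    isBigO_taylor_two hI hθ ((hsmooth i).log fun t ht ↦ hne t ht i)
  have hmean_remainder := (IsBigO.fun_sum (s := Finset.univ) fun i _ ↦
    (hremainder i).const_mul_left (q θ i)).neg_left
  refine hmean_remainder.congr' ?_ EventuallyEq.rfl
  have hnear : ∀ᶠ ε in 𝓝 0, θ + ε ∈ I :=
    (continuous_const_add θ).continuousAt.preimage_mem_nhds (by simpa using hI.mem_nhds hθ)
  have h1 := sum_mul_deriv_log_eq_zero hI hθ hne hsum
    fun i ↦ (hsmooth i).differentiableOn (by norm_num)
  have h2 := sum_mul_deriv_deriv_log hI hθ hne hsum fun i ↦ (hsmooth i).of_le (by norm_num)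
  filter_upwards [hnear] with ε hε
  have hlog : ∀ i, Real.log (q θ i / q (θ + ε) i) = ℓ i θ - ℓ i (θ + ε) := fun i ↦
    Real.log_div (hne θ hθ i) (hne _ hε i)
  have hexpand : ∀ i, q θ i * (ℓ i (θ + ε) - ℓ i θ - ε * deriv (ℓ i) θ
      - ε ^ 2 / 2 * deriv (deriv (ℓ i)) θ) = -(q θ i * (ℓ i θ - ℓ i (θ + ε)))
        - ε * (q θ i * deriv (ℓ i) θ) - ε ^ 2 / 2 * (q θ i * deriv (deriv (ℓ i)) θ) :=
    fun i ↦ by ring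
  simp only [hexpand, hlog, Finset.sum_sub_distrib, ← Finset.mul_sum, Finset.sum_neg_distrib]
  rw [h1, h2]
  ring

end ConstantSumFamily

theorem stmt_3_general {E : Type*} [Fintype E]
    (I : Set ℝ) (hI : IsOpen I) (θ : ℝ) (hθ : θ ∈ I)
    (p : ℝ → E → E → ℝ) (μ : E → ℝ)
    (hp : ∀ t ∈ I, ∀ σ σ', 0 < p t σ σ')
    (hprow : ∀ t ∈ I, ∀ σ, ∑ σ', p t σ σ' = 1)
    (hsmooth : ∀ σ σ', ContDiffOn ℝ 3 (fun t => p t σ σ') I) :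
    (fun ε : ℝ =>
        (∑ σ, μ σ * ∑ σ', p θ σ σ' * Real.log (p θ σ σ' / p (θ + ε) σ σ'))
          - (1 / 2) * ε ^ 2 *
            (∑ σ, μ σ * ∑ σ', p θ σ σ' *
              (deriv (fun t => Real.log (p t σ σ')) θ) ^ 2))
      =O[nhds 0] fun ε : ℝ => |ε| ^ 3 := by
  have hrow : ∀ σ, _ := fun σ ↦ isBigO_sum_mul_log_div_sub_fisher (q := fun t ↦ p t σ) hI hθ
    (fun t ht ↦ (hp t ht σ · |>.ne')) (fun t ht ↦ hprow t ht σ) (hsmooth σ)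
  refine (IsBigO.fun_sum (s := Finset.univ) fun σ _ ↦ (hrow σ).const_mul_left (μ σ)).congr_left
    fun ε ↦ ?_
  simp only [mul_sub, Finset.sum_sub_distrib, Finset.mul_sum, mul_left_comm (μ _)]

theorem stmt_3 {E : Type*} [Fintype E]
    (I : Set ℝ) (hI : IsOpen I) (θ : ℝ) (hθ : θ ∈ I)
    (p : ℝ → E → E → ℝ) (μ : E → ℝ)
    (hp : ∀ t ∈ I, ∀ σ σ', 0 < p t σ σ')
    (hprow : ∀ t ∈ I, ∀ σ, ∑ σ', p t σ σ' = 1)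
    (hsmooth : ∀ σ σ', ContDiffOn ℝ 3 (fun t => p t σ σ') I)
    (hμpos : ∀ σ, 0 < μ σ) (hμ1 : ∑ σ, μ σ = 1)
    (hμstat : ∀ σ', ∑ σ, μ σ * p θ σ σ' = μ σ') :
    (fun ε : ℝ =>
        (∑ σ, μ σ * ∑ σ', p θ σ σ' * Real.log (p θ σ σ' / p (θ + ε) σ σ'))
          - (1 / 2) * ε ^ 2 *
            (∑ σ, μ σ * ∑ σ', p θ σ σ' *
              (deriv (fun t => Real.log (p t σ σ')) θ) ^ 2))
      =O[nhds 0] fun ε : ℝ => |ε| ^ 3 :=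
  stmt_3_general I hI θ hθ p μ hp hprow hsmooth
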